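/- Let i, j ∈ I with a_{ij} = −1 and m ∈ ℤ. Set F_m := (v^{1/2}E_{i,m}E_{j,m} − v^{−1/2}E_{j,m}E_{i,m})/(v − v^{−1}) in 𝒜. Then (E_{i,m+2}K_{i,m+1}^{−1}) · F_m = v^{−1} · F_m · (E_{i,m+2}K_{i,m+1}^{−1}). (This is the verification that σ_i preserves relation (SD4) in the case a_{ij} = −1 and k = i.) -/
import Mathlib


/-!
Braid group action on the twisted semi-derived Hall algebra (Contu, arXiv:2410.18604).

We work with the algebra `𝒜 = 𝒮𝒟ℋ_tw(C^b(𝒫))` given by its presentation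
(Proposition `prop_presenentation_semiderived_E_i` of the paper): generators
`E_{i,m}`, `K_{i,m}`, `K_{i,m}⁻¹` (`i ∈ I`, `m ∈ ℤ`) over `F = ℚ(v^{1/2})`,
subject to the relations (SD0)–(SD5).
-/

noncomputable section

namespace SDHall

/-- The field `ℚ(v^{1/2})` of rational functions over `ℚ` in one indeterminate `v^{1/2}`. -/
abbrev F₀ : Type := RatFunc ℚ

/-- The indeterminate `v^{1/2}`. -/
def sq : F₀ := RatFunc.X

/-- `v := (v^{1/2})²`. -/
def v : F₀ := sq ^ 2

/-- The sign `(-1)^n` for an integer `n`. -/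
def sgn (n : ℤ) : ℤ := (((-1 : ℤˣ) ^ n : ℤˣ) : ℤ)

/-- Generators `E_{i,m}`, `K_{i,m}`, `K_{i,m}⁻¹` of the presented algebra. -/
inductive Gen (I : Type) : Type
  | E : I → ℤ → Gen I
  | K : I → ℤ → Gen I
  | Kinv : I → ℤ → Gen I

variable {I : Type}

def e (i : I) (m : ℤ) : FreeAlgebra F₀ (Gen I) := FreeAlgebra.ι F₀ (Gen.E i m)
def κ (i : I) (m : ℤ) : FreeAlgebra F₀ (Gen I) := FreeAlgebra.ι F₀ (Gen.K i m)
def κ' (i : I) (m : ℤ) : FreeAlgebra F₀ (Gen I) := FreeAlgebra.ι F₀ (Gen.Kinv i m)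

/-- The defining relations (SD0)–(SD5) of the twisted semi-derived Hall algebra:
(SD0) `K_{i,m}K_{i,m}⁻¹ = 1 = K_{i,m}⁻¹K_{i,m}`;
(SD1) each `K_{i,m}` is central;
(SD2) `E_{i,m}E_{j,m} = E_{j,m}E_{i,m}` if `a_{ij} = 0`;
(SD3) `E_{i,m}²E_{j,m} − (v+v⁻¹)E_{i,m}E_{j,m}E_{i,m} + E_{j,m}E_{i,m}² = 0` if `a_{ij} = −1`;
(SD4) `E_{i,m+1}E_{j,m} = v^{a_{ij}}E_{j,m}E_{i,m+1} + δ_{ij}(1−v²)K_{i,m}`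
      (split into the cases `i ≠ j` and `i = j`);
(SD5) `E_{j,r}E_{i,l} = v^{−(−1)^{r−l}a_{ij}}E_{i,l}E_{j,r}` for `r > l+1`. -/
inductive Rel (a : I → I → ℤ) : FreeAlgebra F₀ (Gen I) → FreeAlgebra F₀ (Gen I) → Prop
  | sd0a (i : I) (m : ℤ) : Rel a (κ i m * κ' i m) 1
  | sd0b (i : I) (m : ℤ) : Rel a (κ' i m * κ i m) 1
  | sd1 (i : I) (m : ℤ) (x : FreeAlgebra F₀ (Gen I)) : Rel a (κ i m * x) (x * κ i m)
  | sd2 (i j : I) (m : ℤ) : a i j = 0 → Rel a (e i m * e j m) (e j m * e i m)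
  | sd3 (i j : I) (m : ℤ) : a i j = -1 →
      Rel a (e i m ^ 2 * e j m - (v + v⁻¹) • (e i m * e j m * e i m) + e j m * e i m ^ 2) 0
  | sd4_ne (i j : I) (m : ℤ) : i ≠ j →
      Rel a (e i (m + 1) * e j m) ((v ^ (a i j)) • (e j m * e i (m + 1)))
  | sd4_eq (i : I) (m : ℤ) :
      Rel a (e i (m + 1) * e i m)
        ((v ^ (a i i)) • (e i m * e i (m + 1)) + ((1 : F₀) - v ^ 2) • κ i m)
  | sd5 (i j : I) (r l : ℤ) : r > l + 1 →
      Rel a (e j r * e i l) ((v ^ (-(sgn (r - l)) * a i j)) • (e i l * e j r))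

/-- The twisted semi-derived Hall algebra `𝒜`, presented by generators and relations. -/
abbrev A (a : I → I → ℤ) : Type := RingQuot (Rel a)

/-- The generator `E_{i,m}` of `𝒜`. -/
def E (a : I → I → ℤ) (i : I) (m : ℤ) : A a := RingQuot.mkAlgHom F₀ (Rel a) (e i m)

/-- The generator `K_{i,m}` of `𝒜`. -/
def K (a : I → I → ℤ) (i : I) (m : ℤ) : A a := RingQuot.mkAlgHom F₀ (Rel a) (κ i m)

/-- The generator `K_{i,m}⁻¹` of `𝒜`. -/
def Kinv (a : I → I → ℤ) (i : I) (m : ℤ) : A a := RingQuot.mkAlgHom F₀ (Rel a) (κ' i m)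

/-- `a` is a simply-laced generalized Cartan matrix: symmetric, `a_{ii} = 2`,
and `a_{ij} ∈ {0, −1}` for `i ≠ j`. -/
def IsCartan (a : I → I → ℤ) : Prop :=
  (∀ i j, a i j = a j i) ∧ (∀ i, a i i = 2) ∧ ∀ i j, i ≠ j → a i j = 0 ∨ a i j = -1

/-- The element `(v^{1/2}E_{i,m}E_{j,m} − v^{−1/2}E_{j,m}E_{i,m})/(v − v^{−1})` of `𝒜`. -/
def T (a : I → I → ℤ) (i j : I) (m : ℤ) : A a :=
  (v - v⁻¹)⁻¹ • (sq • (E a i m * E a j m) - sq⁻¹ • (E a j m * E a i m))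

/-- The defining formulas for the braid group operator `σᵢ` on the generators:
`σᵢ(E_{i,m}) = E_{i,m+1}K_{i,m}⁻¹`;
`σᵢ(E_{j,m}) = (v^{1/2}E_{i,m}E_{j,m} − v^{−1/2}E_{j,m}E_{i,m})/(v − v^{−1})` if `a_{ij} = −1`;
`σᵢ(E_{j,m}) = E_{j,m}` if `a_{ij} = 0`;
`σᵢ(K_{i,m}) = K_{i,m}⁻¹`; `σᵢ(K_{j,m}) = K_{i,m}K_{j,m}` if `a_{ij} = −1`;
`σᵢ(K_{j,m}) = K_{j,m}` if `a_{ij} = 0`. -/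
def SigmaSpec (a : I → I → ℤ) (i : I) (σ : A a →ₐ[F₀] A a) : Prop :=
  (∀ m : ℤ, σ (E a i m) = E a i (m + 1) * Kinv a i m) ∧
  (∀ (j : I) (m : ℤ), a i j = -1 → σ (E a j m) = T a i j m) ∧
  (∀ (j : I) (m : ℤ), a i j = 0 → σ (E a j m) = E a j m) ∧
  (∀ m : ℤ, σ (K a i m) = Kinv a i m) ∧
  (∀ (j : I) (m : ℤ), a i j = -1 → σ (K a j m) = K a i m * K a j m) ∧
  (∀ (j : I) (m : ℤ), a i j = 0 → σ (K a j m) = K a j m)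

/-- The defining formulas for the inverse operator `σᵢ'` on the generators:
`σᵢ'(E_{i,m}) = E_{i,m−1}K_{i,m−1}⁻¹`;
`σᵢ'(E_{j,m}) = (v^{1/2}E_{j,m}E_{i,m} − v^{−1/2}E_{i,m}E_{j,m})/(v − v^{−1})` if `a_{ij} = −1`;
`σᵢ'(E_{j,m}) = E_{j,m}` if `a_{ij} = 0`;
`σᵢ'(K_{i,m}) = K_{i,m}⁻¹`; `σᵢ'(K_{j,m}) = K_{i,m}K_{j,m}` if `a_{ij} = −1`;
`σᵢ'(K_{j,m}) = K_{j,m}` if `a_{ij} = 0`. -/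
def SigmaSpec' (a : I → I → ℤ) (i : I) (σ : A a →ₐ[F₀] A a) : Prop :=
  (∀ m : ℤ, σ (E a i m) = E a i (m - 1) * Kinv a i (m - 1)) ∧
  (∀ (j : I) (m : ℤ), a i j = -1 → σ (E a j m) = T a j i m) ∧
  (∀ (j : I) (m : ℤ), a i j = 0 → σ (E a j m) = E a j m) ∧
  (∀ m : ℤ, σ (K a i m) = Kinv a i m) ∧
  (∀ (j : I) (m : ℤ), a i j = -1 → σ (K a j m) = K a i m * K a j m) ∧
  (∀ (j : I) (m : ℤ), a i j = 0 → σ (K a j m) = K a j m)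

lemma v_ne_zero : (v : F₀) ≠ 0 := pow_ne_zero _ RatFunc.X_ne_zero

lemma K_central (a : I → I → ℤ) (i : I) (m : ℤ) (x : A a) :
    K a i m * x = x * K a i m := by
  obtain ⟨y, rfl⟩ := RingQuot.mkAlgHom_surjective F₀ (Rel a) x
  have := RingQuot.mkAlgHom_rel F₀ (Rel.sd1 (a := a) i m y)
  simpa [K, map_mul] using this

lemma K_Kinv (a : I → I → ℤ) (i : I) (m : ℤ) : K a i m * Kinv a i m = 1 := by
  have := RingQuot.mkAlgHom_rel F₀ (Rel.sd0a (a := a) i m)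
  simpa [K, Kinv, map_mul] using this

lemma Kinv_K (a : I → I → ℤ) (i : I) (m : ℤ) : Kinv a i m * K a i m = 1 := by
  have := RingQuot.mkAlgHom_rel F₀ (Rel.sd0b (a := a) i m)
  simpa [K, Kinv, map_mul] using this

lemma Kinv_central (a : I → I → ℤ) (i : I) (m : ℤ) (x : A a) :
    Kinv a i m * x = x * Kinv a i m := by
  calc Kinv a i m * x = Kinv a i m * x * (K a i m * Kinv a i m) := by
        rw [K_Kinv, mul_one]
    _ = Kinv a i m * (x * K a i m) * Kinv a i m := by
        rw [mul_assoc, mul_assoc, mul_assoc]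
    _ = Kinv a i m * (K a i m * x) * Kinv a i m := by rw [K_central]
    _ = (Kinv a i m * K a i m) * (x * Kinv a i m) := by
        rw [mul_assoc, mul_assoc, mul_assoc]
    _ = x * Kinv a i m := by rw [Kinv_K, one_mul]

lemma sgn_two : sgn 2 = 1 := by decide

lemma E_swap (a : I → I → ℤ) (i k : I) (m : ℤ) :
    E a i (m + 2) * E a k m = (v ^ (-(a k i))) • (E a k m * E a i (m + 2)) := by
  have := RingQuot.mkAlgHom_rel F₀ (Rel.sd5 (a := a) k i (m + 2) m (by omega))
  have h2 : m + 2 - m = (2 : ℤ) := by ring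
  simpa [E, map_mul, map_smul, h2, sgn_two] using this

end SDHall

open SDHall

/-- For `a_{ij} = −1` and `m ∈ ℤ`, set
`F_m := (v^{1/2}E_{i,m}E_{j,m} − v^{−1/2}E_{j,m}E_{i,m})/(v − v^{−1})`. Then
`(E_{i,m+2}K_{i,m+1}⁻¹)·F_m = v⁻¹·F_m·(E_{i,m+2}K_{i,m+1}⁻¹)` in `𝒜`.
(Verification that `σᵢ` preserves (SD4) in the case `a_{ij} = −1`, `k = i`.) -/
theorem sd4_preserved_offdiagonal (I : Type) [Fintype I] (a : I → I → ℤ)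
    (hA : IsCartan a) (i j : I) (hij : a i j = -1) (m : ℤ) :
    (E a i (m + 2) * Kinv a i (m + 1)) * T a i j m
      = v⁻¹ • (T a i j m * (E a i (m + 2) * Kinv a i (m + 1))) := by
  obtain ⟨hsym, hdiag, _⟩ := hA
  have hXi : E a i (m + 2) * E a i m = (v ^ (-2 : ℤ)) • (E a i m * E a i (m + 2)) := by
    have h := E_swap a i i m
    rwa [hdiag i] at h
  have hXj : E a i (m + 2) * E a j m = v • (E a j m * E a i (m + 2)) := by
    have h := E_swap a i j m
    rw [hsym j i, hij] at h
    simpa using h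
  have hvv : v ^ (-2 : ℤ) * v = v⁻¹ := by
    rw [show (-2 : ℤ) = -1 + -1 by norm_num, zpow_add₀ v_ne_zero, zpow_neg_one,
      mul_assoc, inv_mul_cancel₀ v_ne_zero, mul_one]
  have h1 : E a i (m + 2) * (E a i m * E a j m)
      = v⁻¹ • (E a i m * E a j m * E a i (m + 2)) := by
    rw [← mul_assoc, hXi, smul_mul_assoc, mul_assoc, hXj, mul_smul_comm, smul_smul,
      hvv, ← mul_assoc]
  have h2 : E a i (m + 2) * (E a j m * E a i m)
      = v⁻¹ • (E a j m * E a i m * E a i (m + 2)) := by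
    rw [← mul_assoc, hXj, smul_mul_assoc, mul_assoc, hXi, mul_smul_comm, smul_smul,
      mul_comm, hvv, ← mul_assoc]
  have key : E a i (m + 2) * (SDHall.sq • (E a i m * E a j m) - SDHall.sq⁻¹ • (E a j m * E a i m))
      = v⁻¹ • ((SDHall.sq • (E a i m * E a j m) - SDHall.sq⁻¹ • (E a j m * E a i m)) * E a i (m + 2)) := by
    rw [mul_sub, mul_smul_comm, mul_smul_comm, h1, h2, sub_mul, smul_mul_assoc,
      smul_mul_assoc]
    simp only [smul_sub, smul_smul]
    rw [mul_comm SDHall.sq v⁻¹, mul_comm SDHall.sq⁻¹ v⁻¹]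
  rw [T, mul_assoc, Kinv_central a i (m + 1), ← mul_assoc, mul_smul_comm, key,
    smul_mul_assoc, smul_mul_assoc, smul_mul_assoc, mul_assoc]
  rw [smul_comm]
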